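/- Injectivity perturbation: let Q, Q̂ ∈ ℝ^{n×r} each have orthonormal columns and let 𝐀 ∈ ℝ^{m×n(n+1)/2}. Then |η_𝐀(Q) − η_𝐀(Q̂)| ≤ 10·‖𝐀‖·‖(I − Q̂Q̂ᵀ)Q‖, where for a matrix U with orthonormal columns η_𝐀(U) := min{‖𝐀·svec(UVᵀ + VUᵀ)‖ : V ∈ ℝ^{n×r}, ‖UVᵀ + VUᵀ‖_F = 1}, and ‖·‖ denotes the spectral norm. -/

import Mathlib

open Matrix
open scoped Kronecker

noncomputable section

/-- Euclidean norm of a vector. -/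
def vnorm {I : Type*} [Fintype I] (v : I → ℝ) : ℝ := Real.sqrt (∑ i, v i ^ 2)

/-- Frobenius norm of a matrix. -/
def frobNorm {I J : Type*} [Fintype I] [Fintype J] (A : Matrix I J ℝ) : ℝ :=
  Real.sqrt (∑ i, ∑ j, A i j ^ 2)

/-- Spectral norm (ℓ₂ operator norm) of a matrix. -/
def specNorm {I J : Type*} [Fintype I] [Fintype J] (A : Matrix I J ℝ) : ℝ :=
  sSup {c | ∃ v : J → ℝ, vnorm v ≤ 1 ∧ c = vnorm (A *ᵥ v)}

/-- Largest (real) eigenvalue of a square matrix. -/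
def lmax {I : Type*} [Fintype I] (A : Matrix I I ℝ) : ℝ :=
  sSup {t | ∃ v : I → ℝ, v ≠ 0 ∧ A *ᵥ v = t • v}

/-- Smallest (real) eigenvalue of a square matrix. -/
def lmin {I : Type*} [Fintype I] (A : Matrix I I ℝ) : ℝ :=
  sInf {t | ∃ v : I → ℝ, v ≠ 0 ∧ A *ᵥ v = t • v}

/-- Column-stacking vectorization `vec`: `vecM X (j, i) = X i j`. -/
def vecM {J : Type*} (X : Matrix J J ℝ) : J × J → ℝ := fun p => X p.2 p.1

/-- `Ψ` is an orthonormal basis matrix for the space of vectorized symmetric matrices: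
`ΨᵀΨ = I` and `ΨΨᵀ` is the orthogonal projection onto vectorized symmetric matrices. -/
def IsSymBasis {J K : Type*} [Fintype J] [Fintype K] [DecidableEq K]
    (Ψ : Matrix (J × J) K ℝ) : Prop :=
  Ψᵀ * Ψ = 1 ∧ ∀ X : Matrix J J ℝ, Ψ *ᵥ (Ψᵀ *ᵥ vecM X) = vecM ((1/2 : ℝ) • (X + Xᵀ))

/-- Symmetric vectorization with respect to the basis matrix `Ψ`. -/
def svec {J K : Type*} [Fintype J] (Ψ : Matrix (J × J) K ℝ) (X : Matrix J J ℝ) : K → ℝ :=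
  Ψᵀ *ᵥ vecM X

/-- Symmetric Kronecker product with respect to the basis matrices `Ψ₁, Ψ₂`. -/
def skron {J J' K K' : Type*} [Fintype J] [Fintype J']
    (Ψ₁ : Matrix (J × J) K ℝ) (Ψ₂ : Matrix (J' × J') K' ℝ)
    (A B : Matrix J J' ℝ) : Matrix K K' ℝ :=
  (1/2 : ℝ) • (Ψ₁ᵀ * ((A ⊗ₖ B + B ⊗ₖ A) * Ψ₂))

/-- Positive semidefinite square root (junk value `0` off the PSD cone). -/
def psqrt {J : Type*} [Fintype J] [DecidableEq J] (A : Matrix J J ℝ) : Matrix J J ℝ :=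
  @dite _ A.PosSemidef (Classical.dec _) (fun h => (h.1.eigenvectorUnitary : Matrix J J ℝ) *
    diagonal (Real.sqrt ∘ h.1.eigenvalues) * (star (h.1.eigenvectorUnitary : Matrix J J ℝ))) (fun _ => 0)

/-- Condition number in spectral norm. -/
def condNum {J : Type*} [Fintype J] [DecidableEq J] (M : Matrix J J ℝ) : ℝ :=
  specNorm M * specNorm M⁻¹

/-- Assumption A1: `W` is the Nesterov--Todd scaling point of a well-centered
primal-dual pair `(X, S)` that is `O(μ)`-close to a strictly complementary solution. -/
def A1 {n : ℕ} (μ L δ χ₁ : ℝ) (W X S Xs Ss : Matrix (Fin n) (Fin n) ℝ) : Prop :=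
  X.PosDef ∧ S.PosDef ∧ Xs.PosSemidef ∧ Ss.PosSemidef ∧ Xs * Ss = 0 ∧
    (Xs + Ss - χ₁⁻¹ • (1 : Matrix (Fin n) (Fin n) ℝ)).PosSemidef ∧
    ((1 : Matrix (Fin n) (Fin n) ℝ) - (Xs + Ss)).PosSemidef ∧
    W = psqrt X * (psqrt (psqrt X * S * psqrt X))⁻¹ * psqrt X ∧
    specNorm ((1/μ) • (psqrt X * S * psqrt X) - 1) ≤ δ ∧
    specNorm (X - Xs) ≤ L * μ ∧ specNorm (S - Ss) ≤ L

/-- The tangent-space injectivity constant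
`η_𝐀(U) = min{‖𝐀 svec(UVᵀ + VUᵀ)‖ : ‖UVᵀ + VUᵀ‖_F = 1}`. -/
def eta {n m r : ℕ} (Ψn : Matrix (Fin n × Fin n) (Fin (n * (n + 1) / 2)) ℝ)
    (A : Matrix (Fin m) (Fin (n * (n + 1) / 2)) ℝ)
    (U : Matrix (Fin n) (Fin r) ℝ) : ℝ :=
  sInf {c | ∃ V : Matrix (Fin n) (Fin r) ℝ,
    frobNorm (U * Vᵀ + V * Uᵀ) = 1 ∧ c = vnorm (A *ᵥ svec Ψn (U * Vᵀ + V * Uᵀ))}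

set_option linter.unusedSectionVars false



section basics
variable {I J K : Type*} [Fintype I] [Fintype J] [Fintype K]

lemma vnorm_nonneg (v : I → ℝ) : 0 ≤ vnorm v := Real.sqrt_nonneg _

lemma dot_self_nonneg (v : I → ℝ) : 0 ≤ v ⬝ᵥ v := by
  simpa [dotProduct, ← sq] using Finset.sum_nonneg fun i _ => sq_nonneg (v i)

lemma vnorm_eq_sqrt_dot (v : I → ℝ) : vnorm v = Real.sqrt (v ⬝ᵥ v) := by
  simp [vnorm, dotProduct, sq]

lemma vnorm_sq (v : I → ℝ) : vnorm v ^ 2 = v ⬝ᵥ v := by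
  rw [vnorm_eq_sqrt_dot, Real.sq_sqrt (dot_self_nonneg v)]

lemma dot_le_vnorm_mul (v w : I → ℝ) : v ⬝ᵥ w ≤ vnorm v * vnorm w := by
  simpa [vnorm, dotProduct] using Real.sum_mul_le_sqrt_mul_sqrt Finset.univ v w

lemma vnorm_add_le (v w : I → ℝ) : vnorm (v + w) ≤ vnorm v + vnorm w := by
  have h : (v + w) ⬝ᵥ (v + w) ≤ (vnorm v + vnorm w) ^ 2 := by
    have h1 := dot_le_vnorm_mul v w
    have h2 : (v + w) ⬝ᵥ (v + w) = v ⬝ᵥ v + 2 * (v ⬝ᵥ w) + w ⬝ᵥ w := by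
      simp [add_dotProduct, dotProduct_add, dotProduct_comm w v]; ring
    rw [h2, ← vnorm_sq, ← vnorm_sq]; nlinarith [vnorm_nonneg v, vnorm_nonneg w]
  calc vnorm (v + w) = Real.sqrt ((v+w) ⬝ᵥ (v+w)) := vnorm_eq_sqrt_dot _
    _ ≤ Real.sqrt ((vnorm v + vnorm w) ^ 2) := Real.sqrt_le_sqrt h
    _ = vnorm v + vnorm w := by
        rw [Real.sqrt_sq (by nlinarith [vnorm_nonneg v, vnorm_nonneg w])]

lemma vnorm_smul (c : ℝ) (v : I → ℝ) : vnorm (c • v) = |c| * vnorm v := by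
  simp only [vnorm, Pi.smul_apply, smul_eq_mul, mul_pow, ← Finset.mul_sum]
  rw [Real.sqrt_mul (sq_nonneg c), Real.sqrt_sq_eq_abs]

lemma vnorm_sub_le (v w : I → ℝ) : vnorm v - vnorm w ≤ vnorm (v - w) := by
  have := vnorm_add_le (v - w) w
  simpa using this

lemma vnorm_zero : vnorm (0 : I → ℝ) = 0 := by simp [vnorm]

lemma vnorm_eq_zero {v : I → ℝ} (h : vnorm v = 0) : v = 0 := by
  funext j
  have h1 : v ⬝ᵥ v = 0 := by rw [← vnorm_sq, h]; norm_num
  have h2 : ∑ i, v i ^ 2 = 0 := by simpa [dotProduct, sq] using h1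
  have h3 := (Finset.sum_eq_zero_iff_of_nonneg
    (fun i (_ : i ∈ Finset.univ) => sq_nonneg (v i))).mp h2 j (Finset.mem_univ j)
  exact pow_eq_zero_iff two_ne_zero |>.mp h3

lemma dot_expand (x y : I → ℝ) :
    (x + y) ⬝ᵥ (x + y) = x ⬝ᵥ x + 2 * (x ⬝ᵥ y) + y ⬝ᵥ y := by
  simp [dotProduct_add, add_dotProduct, dotProduct_comm y x]
  ring

end basics
section spec
variable {I J K : Type*} [Fintype I] [Fintype J] [Fintype K]

def sset {I J : Type*} [Fintype I] [Fintype J] (A : Matrix I J ℝ) : Set ℝ :=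
  {c | ∃ v : J → ℝ, vnorm v ≤ 1 ∧ c = vnorm (A *ᵥ v)}

lemma specNorm_eq_sSup (A : Matrix I J ℝ) : specNorm A = sSup (sset A) := rfl

lemma sset_nonempty (A : Matrix I J ℝ) : (sset A).Nonempty :=
  ⟨vnorm (A *ᵥ 0), 0, by simp [vnorm_zero], rfl⟩

lemma sset_bound (A : Matrix I J ℝ) : ∀ c ∈ sset A,
    c ≤ Real.sqrt (∑ i, (∑ j, |A i j|) ^ 2) := by
  rintro c ⟨v, hv, rfl⟩
  have hv1 : ∀ j, |v j| ≤ 1 := by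
    intro j
    have h1 : ∑ i, v i ^ 2 ≤ 1 := Real.sqrt_le_one.mp hv
    have h2 := Finset.single_le_sum (f := fun i => v i ^ 2)
        (fun i _ => sq_nonneg _) (Finset.mem_univ j)
    have h3 : v j ^ 2 ≤ 1 := le_trans h2 h1
    exact abs_le_one_iff_mul_self_le_one.mpr (by nlinarith)
  apply Real.sqrt_le_sqrt
  apply Finset.sum_le_sum
  intro i _
  have habs : |(A *ᵥ v) i| ≤ ∑ j, |A i j| := by
    calc |(A *ᵥ v) i| = |∑ j, A i j * v j| := by simp [mulVec, dotProduct]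
      _ ≤ ∑ j, |A i j * v j| := Finset.abs_sum_le_sum_abs _ _
      _ ≤ ∑ j, |A i j| := by
          apply Finset.sum_le_sum; intro j _
          rw [abs_mul]
          exact mul_le_of_le_one_right (abs_nonneg _) (hv1 j)
  calc (A *ᵥ v) i ^ 2 = |(A *ᵥ v) i| ^ 2 := (sq_abs _).symm
    _ ≤ (∑ j, |A i j|) ^ 2 := by
        apply pow_le_pow_left₀ (abs_nonneg _) habs

lemma sset_bddAbove (A : Matrix I J ℝ) : BddAbove (sset A) :=
  ⟨_, sset_bound A⟩

lemma specNorm_nonneg (A : Matrix I J ℝ) : 0 ≤ specNorm A := by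
  have : vnorm (A *ᵥ 0) ∈ sset A := ⟨0, by simp [vnorm_zero], rfl⟩
  have h := le_csSup (sset_bddAbove A) this
  simpa [vnorm_zero, specNorm_eq_sSup] using h

lemma vnorm_mulVec_le (A : Matrix I J ℝ) (v : J → ℝ) :
    vnorm (A *ᵥ v) ≤ specNorm A * vnorm v := by
  rcases eq_or_ne (vnorm v) 0 with h0 | h0
  · have hdot : ∑ i, v i ^ 2 = 0 := by
      have h := vnorm_sq v
      rw [h0] at h
      have : v ⬝ᵥ v = 0 := by linarith [h]
      simpa [dotProduct, sq] using this
    have hv : v = 0 := by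
      funext j
      have := (Finset.sum_eq_zero_iff_of_nonneg
        (fun i (_ : i ∈ Finset.univ) => sq_nonneg (v i))).mp hdot j (Finset.mem_univ j)
      exact pow_eq_zero_iff two_ne_zero |>.mp this
    simp [hv, h0, vnorm_zero]
  · have hvpos : 0 < vnorm v := lt_of_le_of_ne (vnorm_nonneg v) (Ne.symm h0)
    have hmem : vnorm (A *ᵥ ((vnorm v)⁻¹ • v)) ∈ sset A := by
      refine ⟨(vnorm v)⁻¹ • v, ?_, rfl⟩
      rw [vnorm_smul, abs_of_pos (by positivity)]
      rw [inv_mul_cancel₀ h0]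
    have hle := le_csSup (sset_bddAbove A) hmem
    rw [Matrix.mulVec_smul, vnorm_smul, abs_of_pos (by positivity)] at hle
    have key : vnorm v * ((vnorm v)⁻¹ * vnorm (A *ᵥ v)) ≤ vnorm v * specNorm A :=
      mul_le_mul_of_nonneg_left hle hvpos.le
    have heq : vnorm v * ((vnorm v)⁻¹ * vnorm (A *ᵥ v)) = vnorm (A *ᵥ v) := by
      field_simp
    rw [mul_comm]
    linarith

lemma specNorm_le_of (A : Matrix I J ℝ) {c : ℝ} (hc : 0 ≤ c)
    (h : ∀ v, vnorm (A *ᵥ v) ≤ c * vnorm v) : specNorm A ≤ c := by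
  apply csSup_le (sset_nonempty A)
  rintro x ⟨v, hv, rfl⟩
  calc vnorm (A *ᵥ v) ≤ c * vnorm v := h v
    _ ≤ c * 1 := mul_le_mul_of_nonneg_left hv hc
    _ = c := mul_one c

lemma mulVec_dot (B : Matrix I J ℝ) (v : J → ℝ) (w : I → ℝ) :
    (B *ᵥ v) ⬝ᵥ w = v ⬝ᵥ (Bᵀ *ᵥ w) := by
  simp [Matrix.dotProduct_mulVec, Matrix.vecMul_transpose, mulVec, dotProduct,
    Finset.mul_sum, Finset.sum_mul, transpose_apply]
  rw [Finset.sum_comm]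
  congr 1; funext i; congr 1; funext j; ring

end spec
section spec2
variable {I J K : Type*} [Fintype I] [Fintype J] [Fintype K]

lemma specNorm_transpose_le (B : Matrix I J ℝ) : specNorm Bᵀ ≤ specNorm B := by
  apply specNorm_le_of _ (specNorm_nonneg B)
  intro v
  set x := Bᵀ *ᵥ v with hx
  rcases eq_or_lt_of_le (vnorm_nonneg x) with h0 | h0
  · rw [← h0]; exact mul_nonneg (specNorm_nonneg B) (vnorm_nonneg v)
  · have h1 : vnorm x ^ 2 = v ⬝ᵥ (B *ᵥ x) := by
      have h := mulVec_dot Bᵀ v x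
      rw [Matrix.transpose_transpose] at h
      rw [vnorm_sq, ← h, hx]
    have h2 : v ⬝ᵥ (B *ᵥ x) ≤ vnorm v * (specNorm B * vnorm x) :=
      le_trans (dot_le_vnorm_mul _ _) (mul_le_mul_of_nonneg_left (vnorm_mulVec_le B x) (vnorm_nonneg v))
    nlinarith [h0, h1, h2]

lemma specNorm_transpose (B : Matrix I J ℝ) : specNorm Bᵀ = specNorm B :=
  le_antisymm (specNorm_transpose_le B)
    (by simpa using specNorm_transpose_le Bᵀ)

lemma specNorm_mul_le (B : Matrix I J ℝ) (C : Matrix J K ℝ) :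
    specNorm (B * C) ≤ specNorm B * specNorm C := by
  apply specNorm_le_of _ (mul_nonneg (specNorm_nonneg B) (specNorm_nonneg C))
  intro v
  rw [← Matrix.mulVec_mulVec]
  calc vnorm (B *ᵥ (C *ᵥ v)) ≤ specNorm B * vnorm (C *ᵥ v) := vnorm_mulVec_le _ _
    _ ≤ specNorm B * (specNorm C * vnorm v) :=
        mul_le_mul_of_nonneg_left (vnorm_mulVec_le _ _) (specNorm_nonneg B)
    _ = specNorm B * specNorm C * vnorm v := by ring

end spec2
section frob
variable {I J K L : Type*} [Fintype I] [Fintype J] [Fintype K] [Fintype L]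

lemma frobNorm_nonneg (B : Matrix I J ℝ) : 0 ≤ frobNorm B := Real.sqrt_nonneg _

lemma frobNorm_eq_vnorm_vecM (X : Matrix J J ℝ) : frobNorm X = vnorm (vecM X) := by
  unfold frobNorm vnorm vecM
  congr 1
  rw [Fintype.sum_prod_type]
  exact Finset.sum_comm

lemma frobNorm_transpose (B : Matrix I J ℝ) : frobNorm Bᵀ = frobNorm B := by
  unfold frobNorm
  congr 1
  exact Finset.sum_comm

lemma frobNorm_sq (B : Matrix I J ℝ) : frobNorm B ^ 2 = ∑ i, ∑ j, B i j ^ 2 := by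
  unfold frobNorm
  rw [Real.sq_sqrt]
  exact Finset.sum_nonneg fun i _ => Finset.sum_nonneg fun j _ => sq_nonneg _

lemma spec_mul_frob (B : Matrix I J ℝ) (C : Matrix J K ℝ) :
    frobNorm (B * C) ≤ specNorm B * frobNorm C := by
  have hsum : ∑ i, ∑ j, (B * C) i j ^ 2 ≤ (specNorm B * frobNorm C) ^ 2 := by
    rw [Finset.sum_comm]
    have hcol : ∀ j : K, ∑ i, (B * C) i j ^ 2 ≤ specNorm B ^ 2 * ∑ k, C k j ^ 2 := by
      intro j
      have h1 : (fun i => (B * C) i j) = B *ᵥ (fun k => C k j) := by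
        funext i; simp [Matrix.mul_apply, Matrix.mulVec, dotProduct]
      have h2 : vnorm (B *ᵥ (fun k => C k j)) ≤ specNorm B * vnorm (fun k => C k j) :=
        vnorm_mulVec_le _ _
      have h3 : vnorm (B *ᵥ (fun k => C k j)) ^ 2 ≤
          (specNorm B * vnorm (fun k => C k j)) ^ 2 :=
        pow_le_pow_left₀ (vnorm_nonneg _) h2 2
      have h4 : vnorm (B *ᵥ fun k => C k j) ^ 2 = ∑ i, (B * C) i j ^ 2 := by
        rw [← h1]; unfold vnorm; rw [Real.sq_sqrt]
        exact Finset.sum_nonneg fun i _ => sq_nonneg _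
      have h5 : vnorm (fun k => C k j) ^ 2 = ∑ k, C k j ^ 2 := by
        unfold vnorm; rw [Real.sq_sqrt]
        exact Finset.sum_nonneg fun i _ => sq_nonneg _
      calc ∑ i, (B * C) i j ^ 2 = vnorm (B *ᵥ fun k => C k j) ^ 2 := h4.symm
        _ ≤ (specNorm B * vnorm (fun k => C k j)) ^ 2 := h3
        _ = specNorm B ^ 2 * ∑ k, C k j ^ 2 := by rw [mul_pow, h5]
    calc ∑ j : K, ∑ i, (B * C) i j ^ 2 ≤ ∑ j : K, specNorm B ^ 2 * ∑ k, C k j ^ 2 :=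
          Finset.sum_le_sum fun j _ => hcol j
      _ = specNorm B ^ 2 * ∑ j : K, ∑ k, C k j ^ 2 := by rw [Finset.mul_sum]
      _ = specNorm B ^ 2 * ∑ k, ∑ j, C k j ^ 2 := by rw [Finset.sum_comm]
      _ = (specNorm B * frobNorm C) ^ 2 := by rw [mul_pow, frobNorm_sq]
  calc frobNorm (B * C) = Real.sqrt (∑ i, ∑ j, (B * C) i j ^ 2) := rfl
    _ ≤ Real.sqrt ((specNorm B * frobNorm C) ^ 2) := Real.sqrt_le_sqrt hsum
    _ = specNorm B * frobNorm C := Real.sqrt_sq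
        (mul_nonneg (specNorm_nonneg B) (frobNorm_nonneg C))

lemma frob_mul_spec (B : Matrix I J ℝ) (C : Matrix J K ℝ) :
    frobNorm (B * C) ≤ frobNorm B * specNorm C := by
  calc frobNorm (B * C) = frobNorm (B * C)ᵀ := (frobNorm_transpose _).symm
    _ = frobNorm (Cᵀ * Bᵀ) := by rw [Matrix.transpose_mul]
    _ ≤ specNorm Cᵀ * frobNorm Bᵀ := spec_mul_frob _ _
    _ = frobNorm B * specNorm C := by
        rw [specNorm_transpose, frobNorm_transpose]; ring

lemma vecM_add (X Y : Matrix J J ℝ) : vecM (X + Y) = vecM X + vecM Y := rfl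

lemma vecM_sub (X Y : Matrix J J ℝ) : vecM (X - Y) = vecM X - vecM Y := rfl

lemma vecM_smul (c : ℝ) (X : Matrix J J ℝ) : vecM (c • X) = c • vecM X := rfl

lemma frobNorm_add_le (X Y : Matrix J J ℝ) :
    frobNorm (X + Y) ≤ frobNorm X + frobNorm Y := by
  rw [frobNorm_eq_vnorm_vecM, frobNorm_eq_vnorm_vecM, frobNorm_eq_vnorm_vecM, vecM_add]
  exact vnorm_add_le _ _

lemma frobNorm_smul (c : ℝ) (X : Matrix J J ℝ) :
    frobNorm (c • X) = |c| * frobNorm X := by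
  rw [frobNorm_eq_vnorm_vecM, frobNorm_eq_vnorm_vecM, vecM_smul, vnorm_smul]

lemma frobNorm_sub_lower (X Y : Matrix J J ℝ) :
    frobNorm X - frobNorm Y ≤ frobNorm (X - Y) := by
  have := frobNorm_add_le (X - Y) Y
  simpa using this

end frob
section svecsec
variable {J K : Type*} [Fintype J] [Fintype K] [DecidableEq K]

lemma svec_sub (Ψ : Matrix (J × J) K ℝ) (X Y : Matrix J J ℝ) :
    svec Ψ (X - Y) = svec Ψ X - svec Ψ Y := by
  unfold svec
  rw [vecM_sub, Matrix.mulVec_sub]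

lemma svec_smul (Ψ : Matrix (J × J) K ℝ) (c : ℝ) (X : Matrix J J ℝ) :
    svec Ψ (c • X) = c • svec Ψ X := by
  unfold svec
  rw [vecM_smul, Matrix.mulVec_smul]

lemma vnorm_svec (Ψ : Matrix (J × J) K ℝ) (hΨ : IsSymBasis Ψ)
    {X : Matrix J J ℝ} (hX : Xᵀ = X) : vnorm (svec Ψ X) = frobNorm X := by
  have hhalf : (1/2 : ℝ) • (X + Xᵀ) = X := by
    rw [hX, ← two_smul ℝ X, smul_smul]; norm_num
  have hproj : Ψ *ᵥ (Ψᵀ *ᵥ vecM X) = vecM X := by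
    rw [hΨ.2 X, hhalf]
  have hsq : vnorm (svec Ψ X) ^ 2 = vnorm (vecM X) ^ 2 := by
    rw [vnorm_sq, vnorm_sq]
    unfold svec
    have h := mulVec_dot Ψᵀ (vecM X) (Ψᵀ *ᵥ vecM X)
    rw [Matrix.transpose_transpose, hproj] at h
    exact h
  have h1 := vnorm_nonneg (svec Ψ X)
  have h2 := vnorm_nonneg (vecM X)
  rw [frobNorm_eq_vnorm_vecM]
  nlinarith [hsq, h1, h2]

end svecsec

section orth
variable {I J : Type*} [Fintype I] [Fintype J] [DecidableEq I] [DecidableEq J]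

lemma vnorm_mulVec_orth {U : Matrix I J ℝ} (hU : Uᵀ * U = 1) (v : J → ℝ) :
    vnorm (U *ᵥ v) = vnorm v := by
  have hsq : vnorm (U *ᵥ v) ^ 2 = vnorm v ^ 2 := by
    rw [vnorm_sq, vnorm_sq]
    have h := mulVec_dot U v (U *ᵥ v)
    rw [Matrix.mulVec_mulVec, hU, Matrix.one_mulVec] at h
    rw [dotProduct_comm] at h
    exact h
  nlinarith [vnorm_nonneg (U *ᵥ v), vnorm_nonneg v, hsq]

lemma specNorm_orth_le {U : Matrix I J ℝ} (hU : Uᵀ * U = 1) : specNorm U ≤ 1 := by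
  apply specNorm_le_of _ zero_le_one
  intro v
  rw [vnorm_mulVec_orth hU, one_mul]

lemma specNorm_orth_t_le {U : Matrix I J ℝ} (hU : Uᵀ * U = 1) : specNorm Uᵀ ≤ 1 := by
  rw [specNorm_transpose]; exact specNorm_orth_le hU

lemma proj_idem {U : Matrix I J ℝ} (hU : Uᵀ * U = 1) :
    (1 - U * Uᵀ) * (1 - U * Uᵀ) = 1 - U * Uᵀ := by
  have hP : (U * Uᵀ) * (U * Uᵀ) = U * Uᵀ := by
    calc (U * Uᵀ) * (U * Uᵀ) = U * (Uᵀ * U) * Uᵀ := by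
          rw [Matrix.mul_assoc, Matrix.mul_assoc, Matrix.mul_assoc]
      _ = U * Uᵀ := by rw [hU, Matrix.mul_one]
  rw [Matrix.sub_mul, Matrix.mul_sub, Matrix.mul_sub, Matrix.one_mul, Matrix.mul_one, hP]
  abel_nf
  simp

lemma proj_transpose (U : Matrix I J ℝ) : (1 - U * Uᵀ)ᵀ = 1 - U * Uᵀ := by
  rw [Matrix.transpose_sub, Matrix.transpose_one, Matrix.transpose_mul,
    Matrix.transpose_transpose]

lemma specNorm_proj_le {U : Matrix I J ℝ} (hU : Uᵀ * U = 1) :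
    specNorm (1 - U * Uᵀ) ≤ 1 := by
  apply specNorm_le_of _ zero_le_one
  intro v
  rw [one_mul]
  set P : Matrix I I ℝ := 1 - U * Uᵀ with hP
  set w := P *ᵥ v with hw
  rcases eq_or_lt_of_le (vnorm_nonneg w) with h0 | h0
  · rw [← h0]; exact vnorm_nonneg v
  · have h1 : w ⬝ᵥ w = v ⬝ᵥ w := by
      have h := mulVec_dot P v w
      rw [hP, proj_transpose] at h
      have h2 : (1 - U * Uᵀ) *ᵥ w = w := by
        rw [hw, hP, Matrix.mulVec_mulVec, proj_idem hU]
      rw [h2] at h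
      rw [hw, hP] at *
      exact h
    have h2 : v ⬝ᵥ w ≤ vnorm v * vnorm w := dot_le_vnorm_mul _ _
    have h3 : vnorm w ^ 2 = w ⬝ᵥ w := vnorm_sq w
    nlinarith [h0, h1, h2, h3]

end orth
section etasec
variable {n m r : ℕ}
variable (Ψn : Matrix (Fin n × Fin n) (Fin (n * (n + 1) / 2)) ℝ)
variable (A : Matrix (Fin m) (Fin (n * (n + 1) / 2)) ℝ)

def eset (U : Matrix (Fin n) (Fin r) ℝ) : Set ℝ :=
  {c | ∃ V : Matrix (Fin n) (Fin r) ℝ,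
    frobNorm (U * Vᵀ + V * Uᵀ) = 1 ∧ c = vnorm (A *ᵥ svec Ψn (U * Vᵀ + V * Uᵀ))}

lemma eta_eq_sInf (U : Matrix (Fin n) (Fin r) ℝ) : eta Ψn A U = sInf (eset Ψn A U) := rfl

lemma eset_bddBelow (U : Matrix (Fin n) (Fin r) ℝ) : BddBelow (eset Ψn A U) := by
  refine ⟨0, ?_⟩
  rintro c ⟨V, hV, rfl⟩
  exact vnorm_nonneg _

lemma eta_nonneg (U : Matrix (Fin n) (Fin r) ℝ) : 0 ≤ eta Ψn A U := by
  rw [eta_eq_sInf]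
  apply Real.sInf_nonneg
  rintro c ⟨V, hV, rfl⟩
  exact vnorm_nonneg _

lemma eta_r0 (hr : r = 0) (U : Matrix (Fin n) (Fin r) ℝ) : eta Ψn A U = 0 := by
  subst hr
  rw [eta_eq_sInf]
  have : eset Ψn A U = ∅ := by
    ext c
    simp only [eset, Set.mem_setOf_eq, Set.mem_empty_iff_false, iff_false]
    rintro ⟨V, hV, rfl⟩
    have hz : U * Vᵀ + V * Uᵀ = 0 := by
      ext i j
      simp [Matrix.mul_apply, Matrix.add_apply]
    rw [hz] at hV
    simp [frobNorm] at hV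
  rw [this, Real.sInf_empty]

lemma UUt_mul_UUt {U : Matrix (Fin n) (Fin r) ℝ} (hU : Uᵀ * U = 1) :
    U * Uᵀ * (U * Uᵀ) = U * Uᵀ := by
  calc U * Uᵀ * (U * Uᵀ) = U * (Uᵀ * U) * Uᵀ := by
        rw [Matrix.mul_assoc, Matrix.mul_assoc, Matrix.mul_assoc]
    _ = U * Uᵀ := by rw [hU, Matrix.mul_one]

lemma frob_sq_trace {I J : Type*} [Fintype I] [Fintype J] (M : Matrix I J ℝ) :
    frobNorm M ^ 2 = Matrix.trace (M * Mᵀ) := by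
  rw [frobNorm_sq]
  simp [Matrix.trace, Matrix.mul_apply, Matrix.diag, sq]

lemma frob_UUt {U : Matrix (Fin n) (Fin r) ℝ} (hU : Uᵀ * U = 1) :
    frobNorm (U * Uᵀ) = Real.sqrt r := by
  have h1 : frobNorm (U * Uᵀ) ^ 2 = (r : ℝ) := by
    rw [frob_sq_trace]
    rw [Matrix.transpose_mul, Matrix.transpose_transpose]
    rw [UUt_mul_UUt hU]
    rw [Matrix.trace_mul_comm, hU]
    simp
  rw [← h1, Real.sqrt_sq (frobNorm_nonneg _)]

/-- the canonical unit-Frobenius element of the tangent space -/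
lemma exists_unit_elem {U : Matrix (Fin n) (Fin r) ℝ} (hU : Uᵀ * U = 1) (hr : 0 < r) :
    ∃ V : Matrix (Fin n) (Fin r) ℝ, frobNorm (U * Vᵀ + V * Uᵀ) = 1 := by
  have hrpos : (0 : ℝ) < Real.sqrt r := Real.sqrt_pos.mpr (by exact_mod_cast hr)
  set c : ℝ := 1 / (2 * Real.sqrt r) with hc
  refine ⟨c • U, ?_⟩
  have hX : U * (c • U)ᵀ + (c • U) * Uᵀ = (2 * c) • (U * Uᵀ) := by
    rw [Matrix.transpose_smul, Matrix.mul_smul, Matrix.smul_mul]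
    rw [← two_smul ℝ (c • (U * Uᵀ)), smul_smul]
  rw [hX, frobNorm_smul, frob_UUt hU]
  rw [abs_of_pos (by positivity), hc]
  field_simp

lemma eset_nonempty {U : Matrix (Fin n) (Fin r) ℝ} (hU : Uᵀ * U = 1) (hr : 0 < r) :
    (eset Ψn A U).Nonempty := by
  obtain ⟨V, hV⟩ := exists_unit_elem hU hr
  exact ⟨_, V, hV, rfl⟩

lemma tangent_symm (U V : Matrix (Fin n) (Fin r) ℝ) :
    (U * Vᵀ + V * Uᵀ)ᵀ = U * Vᵀ + V * Uᵀ := by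
  rw [Matrix.transpose_add, Matrix.transpose_mul, Matrix.transpose_mul,
    Matrix.transpose_transpose, Matrix.transpose_transpose]
  abel

lemma eta_le_specNorm (hΨn : IsSymBasis Ψn) {U : Matrix (Fin n) (Fin r) ℝ}
    (hU : Uᵀ * U = 1) (hr : 0 < r) : eta Ψn A U ≤ specNorm A := by
  obtain ⟨V, hV⟩ := exists_unit_elem hU hr
  rw [eta_eq_sInf]
  have hmem : vnorm (A *ᵥ svec Ψn (U * Vᵀ + V * Uᵀ)) ∈ eset Ψn A U := ⟨V, hV, rfl⟩
  refine le_trans (csInf_le (eset_bddBelow Ψn A U) hmem) ?_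
  calc vnorm (A *ᵥ svec Ψn (U * Vᵀ + V * Uᵀ))
      ≤ specNorm A * vnorm (svec Ψn (U * Vᵀ + V * Uᵀ)) := vnorm_mulVec_le _ _
    _ = specNorm A * frobNorm (U * Vᵀ + V * Uᵀ) := by
        rw [vnorm_svec Ψn hΨn (tangent_symm U V)]
    _ = specNorm A := by rw [hV, mul_one]

end etasec
section core
variable {n m r : ℕ}

lemma sandwich (P X : Matrix (Fin n) (Fin n) ℝ) :
    X - (P * X + X * P - P * X * P) = (1 - P) * X * (1 - P) := by
  noncomm_ring

lemma proj_decomp (Uh : Matrix (Fin n) (Fin r) ℝ) {X : Matrix (Fin n) (Fin n) ℝ}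
    (hX : Xᵀ = X) :
    Uh * (X * Uh - (2⁻¹ : ℝ) • (Uh * (Uhᵀ * (X * Uh))))ᵀ
      + (X * Uh - (2⁻¹ : ℝ) • (Uh * (Uhᵀ * (X * Uh)))) * Uhᵀ
    = (Uh * Uhᵀ) * X + X * (Uh * Uhᵀ) - (Uh * Uhᵀ) * X * (Uh * Uhᵀ) := by
  simp only [Matrix.transpose_sub, Matrix.transpose_smul, Matrix.transpose_mul,
    Matrix.transpose_transpose, hX, Matrix.mul_sub, Matrix.sub_mul,
    Matrix.mul_smul, Matrix.smul_mul, Matrix.mul_assoc]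
  module

lemma perp_vanish {U : Matrix (Fin n) (Fin r) ℝ} (hU : Uᵀ * U = 1)
    (V : Matrix (Fin n) (Fin r) ℝ) :
    (1 - U * Uᵀ) * (U * Vᵀ + V * Uᵀ) * (1 - U * Uᵀ) = 0 := by
  have h1 : (1 - U * Uᵀ) * U = 0 := by
    rw [Matrix.sub_mul, Matrix.one_mul, Matrix.mul_assoc, hU, Matrix.mul_one, sub_self]
  have h2 : Uᵀ * (1 - U * Uᵀ) = 0 := by
    have := congrArg Matrix.transpose h1
    rw [Matrix.transpose_mul, proj_transpose, Matrix.transpose_zero] at this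
    exact this
  have hexp : (1 - U * Uᵀ) * (U * Vᵀ + V * Uᵀ) * (1 - U * Uᵀ)
      = ((1 - U * Uᵀ) * U) * (Vᵀ * (1 - U * Uᵀ))
        + ((1 - U * Uᵀ) * V) * (Uᵀ * (1 - U * Uᵀ)) := by
    simp only [Matrix.sub_mul, Matrix.mul_sub, Matrix.add_mul, Matrix.mul_add,
      Matrix.one_mul, Matrix.mul_one, Matrix.mul_assoc]
    abel
  rw [hexp, h1, h2, Matrix.zero_mul, Matrix.mul_zero, add_zero]

lemma perp_expand (P : Matrix (Fin n) (Fin n) ℝ) (U V₀ : Matrix (Fin n) (Fin r) ℝ) :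
    (1 - P) * (U * V₀ᵀ + V₀ * Uᵀ) * (1 - P)
    = ((1 - P) * U) * (V₀ᵀ * (1 - P)) + ((1 - P) * V₀) * (Uᵀ * (1 - P)) := by
  simp only [Matrix.sub_mul, Matrix.mul_sub, Matrix.add_mul, Matrix.mul_add,
    Matrix.one_mul, Matrix.mul_one, Matrix.mul_assoc]
  abel

end core
section frob2
variable {I J : Type*} [Fintype I] [Fintype J]

lemma frobNorm_eq_vnorm_uncurry (M : Matrix I J ℝ) :
    frobNorm M = vnorm (fun p : I × J => M p.1 p.2) := by
  unfold frobNorm vnorm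
  congr 1
  rw [Fintype.sum_prod_type]

lemma frobNorm_add_le' (X Y : Matrix I J ℝ) :
    frobNorm (X + Y) ≤ frobNorm X + frobNorm Y := by
  rw [frobNorm_eq_vnorm_uncurry, frobNorm_eq_vnorm_uncurry X, frobNorm_eq_vnorm_uncurry Y]
  exact vnorm_add_le _ _

lemma frobNorm_smul' (c : ℝ) (X : Matrix I J ℝ) : frobNorm (c • X) = |c| * frobNorm X := by
  rw [frobNorm_eq_vnorm_uncurry, frobNorm_eq_vnorm_uncurry X]
  exact vnorm_smul c _

lemma frobNorm_neg (X : Matrix I J ℝ) : frobNorm (-X) = frobNorm X := by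
  have := frobNorm_smul' (-1) X
  simpa using this

lemma frobNorm_sub_le' (X Y : Matrix I J ℝ) :
    frobNorm (X - Y) ≤ frobNorm X + frobNorm Y := by
  rw [sub_eq_add_neg]
  exact le_trans (frobNorm_add_le' _ _) (by rw [frobNorm_neg])

lemma frobNorm_lower (X Y : Matrix I J ℝ) :
    frobNorm X - frobNorm (X - Y) ≤ frobNorm Y := by
  have h : X = Y + (X - Y) := by abel
  have := frobNorm_add_le' Y (X - Y)
  rw [← h] at this
  linarith

end frob2
section onesided
variable {n m r : ℕ}
variable (Ψn : Matrix (Fin n × Fin n) (Fin (n * (n + 1) / 2)) ℝ)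
variable (A : Matrix (Fin m) (Fin (n * (n + 1) / 2)) ℝ)

set_option maxHeartbeats 1000000 in
lemma onesided (hΨn : IsSymBasis Ψn) {U Uh : Matrix (Fin n) (Fin r) ℝ}
    (hU : Uᵀ * U = 1) (hUh : Uhᵀ * Uh = 1) (hr : 0 < r)
    (hδ : specNorm ((1 - Uh * Uhᵀ) * U) < 1 / 3) :
    eta Ψn A Uh * (1 - 3 * specNorm ((1 - Uh * Uhᵀ) * U))
      ≤ eta Ψn A U + 3 * specNorm A * specNorm ((1 - Uh * Uhᵀ) * U) := by
  set δ : ℝ := specNorm ((1 - Uh * Uhᵀ) * U) with hδdef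
  set a : ℝ := specNorm A with hadef
  have hδ0 : 0 ≤ δ := specNorm_nonneg _
  have ha0 : 0 ≤ a := specNorm_nonneg _
  apply le_of_forall_pos_le_add
  intro κ hκ
  -- pick a near-minimizer for U
  have hlt : sInf (eset Ψn A U) < eta Ψn A U + κ := by
    rw [eta_eq_sInf]; linarith
  obtain ⟨c, hcmem, hclt⟩ := exists_lt_of_csInf_lt (eset_nonempty Ψn A hU hr) hlt
  obtain ⟨V, hVfrob, rfl⟩ := hcmem
  set X : Matrix (Fin n) (Fin n) ℝ := U * Vᵀ + V * Uᵀ with hXdef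
  have hXsym : Xᵀ = X := tangent_symm U V
  -- X is in the tangent space of U with a bounded representative V₀
  set V₀ : Matrix (Fin n) (Fin r) ℝ :=
    X * U - (2⁻¹ : ℝ) • (U * (Uᵀ * (X * U))) with hV₀def
  have hV₀ : U * V₀ᵀ + V₀ * Uᵀ = X := by
    have h1 := proj_decomp U hXsym
    have h2 := sandwich (U * Uᵀ) X
    have h3 := perp_vanish hU V
    rw [← hXdef] at h3
    rw [hV₀def, h1]
    rw [h3] at h2
    have := sub_eq_zero.mp h2
    linear_combination (norm := abel) -this
  have hfV₀ : frobNorm V₀ ≤ 3 / 2 := by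
    have h1 : frobNorm (X * U) ≤ 1 := by
      have := frob_mul_spec X U
      rw [hVfrob] at this
      calc frobNorm (X * U) ≤ 1 * specNorm U := this
        _ ≤ 1 * 1 := by
            rw [one_mul, one_mul]; exact specNorm_orth_le hU
        _ = 1 := by norm_num
    have h2 : frobNorm (U * (Uᵀ * (X * U))) ≤ 1 := by
      calc frobNorm (U * (Uᵀ * (X * U)))
          ≤ specNorm U * frobNorm (Uᵀ * (X * U)) := spec_mul_frob _ _
        _ ≤ 1 * frobNorm (Uᵀ * (X * U)) :=
            mul_le_mul_of_nonneg_right (specNorm_orth_le hU) (frobNorm_nonneg _)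
        _ = frobNorm (Uᵀ * (X * U)) := one_mul _
        _ ≤ specNorm Uᵀ * frobNorm (X * U) := spec_mul_frob _ _
        _ ≤ 1 * 1 := by
            apply mul_le_mul (specNorm_orth_t_le hU) h1 (frobNorm_nonneg _) zero_le_one
        _ = 1 := by norm_num
    calc frobNorm V₀ ≤ frobNorm (X * U) + frobNorm ((2⁻¹ : ℝ) • (U * (Uᵀ * (X * U)))) :=
          frobNorm_sub_le' _ _
      _ = frobNorm (X * U) + 2⁻¹ * frobNorm (U * (Uᵀ * (X * U))) := by
          rw [frobNorm_smul']; norm_num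
      _ ≤ 1 + 2⁻¹ * 1 := by
          apply add_le_add h1
          apply mul_le_mul_of_nonneg_left h2 (by norm_num)
      _ = 3 / 2 := by norm_num
  -- the projected matrix
  set P : Matrix (Fin n) (Fin n) ℝ := Uh * Uhᵀ with hPdef
  set Vh : Matrix (Fin n) (Fin r) ℝ :=
    X * Uh - (2⁻¹ : ℝ) • (Uh * (Uhᵀ * (X * Uh))) with hVhdef
  set Xh : Matrix (Fin n) (Fin n) ℝ := Uh * Vhᵀ + Vh * Uhᵀ with hXhdef
  have hXhalt : Xh = P * X + X * P - P * X * P := by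
    rw [hXhdef, hVhdef, proj_decomp Uh hXsym, hPdef]
  have hXhsym : Xhᵀ = Xh := tangent_symm Uh Vh
  have hdiff : X - Xh = (1 - P) * X * (1 - P) := by
    rw [hXhalt]; exact sandwich P X
  -- Frobenius bound on the difference
  have hdiff_frob : frobNorm (X - Xh) ≤ 3 * δ := by
    rw [hdiff]
    have hexp : (1 - P) * X * (1 - P)
        = ((1 - P) * U) * (V₀ᵀ * (1 - P)) + ((1 - P) * V₀) * (Uᵀ * (1 - P)) := by
      rw [← hV₀]
      exact perp_expand P U V₀
    rw [hexp]
    have hsp1 : specNorm ((1 - P) * U) = δ := by rw [hδdef, hPdef]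
    have hspP : specNorm ((1 : Matrix (Fin n) (Fin n) ℝ) - P) ≤ 1 := by
      rw [hPdef]; exact specNorm_proj_le hUh
    have ht1 : frobNorm (((1 - P) * U) * (V₀ᵀ * (1 - P))) ≤ δ * (3 / 2) := by
      calc frobNorm (((1 - P) * U) * (V₀ᵀ * (1 - P)))
          ≤ specNorm ((1 - P) * U) * frobNorm (V₀ᵀ * (1 - P)) := spec_mul_frob _ _
        _ ≤ δ * (3 / 2) := by
            rw [hsp1]
            apply mul_le_mul_of_nonneg_left _ hδ0
            calc frobNorm (V₀ᵀ * (1 - P)) ≤ frobNorm V₀ᵀ * specNorm (1 - P) :=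
                  frob_mul_spec _ _
              _ ≤ (3 / 2) * 1 := by
                  apply mul_le_mul _ hspP (specNorm_nonneg _) (by norm_num)
                  rw [frobNorm_transpose]; exact hfV₀
              _ = 3 / 2 := by norm_num
    have ht2 : frobNorm (((1 - P) * V₀) * (Uᵀ * (1 - P))) ≤ (3 / 2) * δ := by
      have hsp2 : specNorm (Uᵀ * (1 - P)) = δ := by
        have : Uᵀ * (1 - P) = ((1 - P) * U)ᵀ := by
          rw [Matrix.transpose_mul, hPdef, proj_transpose]
        rw [this, specNorm_transpose, hsp1]
      calc frobNorm (((1 - P) * V₀) * (Uᵀ * (1 - P)))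
          ≤ frobNorm ((1 - P) * V₀) * specNorm (Uᵀ * (1 - P)) := frob_mul_spec _ _
        _ ≤ (3 / 2) * δ := by
            rw [hsp2]
            apply mul_le_mul_of_nonneg_right _ hδ0
            calc frobNorm ((1 - P) * V₀) ≤ specNorm (1 - P) * frobNorm V₀ :=
                  spec_mul_frob _ _
              _ ≤ 1 * (3 / 2) := mul_le_mul hspP hfV₀ (frobNorm_nonneg _) zero_le_one
              _ = 3 / 2 := by norm_num
    calc frobNorm (((1 - P) * U) * (V₀ᵀ * (1 - P)) + ((1 - P) * V₀) * (Uᵀ * (1 - P)))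
        ≤ frobNorm (((1 - P) * U) * (V₀ᵀ * (1 - P)))
          + frobNorm (((1 - P) * V₀) * (Uᵀ * (1 - P))) := frobNorm_add_le' _ _
      _ ≤ δ * (3 / 2) + (3 / 2) * δ := add_le_add ht1 ht2
      _ = 3 * δ := by ring
  -- lower bound on the norm of Xh
  set t : ℝ := frobNorm Xh with htdef
  have ht_lb : 1 - 3 * δ ≤ t := by
    have := frobNorm_lower X Xh
    rw [hVfrob] at this
    linarith [hdiff_frob]
  have ht_pos : 0 < t := by linarith
  -- membership of the normalized projection
  have hscaled : Uh * ((t⁻¹ : ℝ) • Vh)ᵀ + ((t⁻¹ : ℝ) • Vh) * Uhᵀ = (t⁻¹ : ℝ) • Xh := by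
    rw [Matrix.transpose_smul, Matrix.mul_smul, Matrix.smul_mul, ← smul_add]
  have hfrobZ : frobNorm ((t⁻¹ : ℝ) • Xh) = 1 := by
    rw [frobNorm_smul', abs_of_pos (inv_pos.mpr ht_pos)]
    exact inv_mul_cancel₀ ht_pos.ne'
  have hmem : vnorm (A *ᵥ svec Ψn (Uh * ((t⁻¹ : ℝ) • Vh)ᵀ + ((t⁻¹ : ℝ) • Vh) * Uhᵀ))
      ∈ eset Ψn A Uh := ⟨(t⁻¹ : ℝ) • Vh, by rw [hscaled]; exact hfrobZ, rfl⟩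
  have hetaUh : eta Ψn A Uh ≤ vnorm (A *ᵥ svec Ψn ((t⁻¹ : ℝ) • Xh)) := by
    rw [eta_eq_sInf]
    have h := csInf_le (eset_bddBelow Ψn A Uh) hmem
    rw [hscaled] at h
    exact h
  have hval : vnorm (A *ᵥ svec Ψn ((t⁻¹ : ℝ) • Xh)) = t⁻¹ * vnorm (A *ᵥ svec Ψn Xh) := by
    rw [svec_smul, Matrix.mulVec_smul, vnorm_smul, abs_of_pos (inv_pos.mpr ht_pos)]
  have hsub_sym : (Xh - X)ᵀ = Xh - X := by
    rw [Matrix.transpose_sub, hXhsym, hXsym]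
  have hsplit : vnorm (A *ᵥ svec Ψn Xh) ≤ vnorm (A *ᵥ svec Ψn X) + 3 * a * δ := by
    have hdecomp : A *ᵥ svec Ψn Xh = A *ᵥ svec Ψn X + A *ᵥ svec Ψn (Xh - X) := by
      rw [svec_sub, Matrix.mulVec_sub]
      abel
    have h1 : vnorm (A *ᵥ svec Ψn Xh)
        ≤ vnorm (A *ᵥ svec Ψn X) + vnorm (A *ᵥ svec Ψn (Xh - X)) := by
      rw [hdecomp]; exact vnorm_add_le _ _
    have h2 : vnorm (A *ᵥ svec Ψn (Xh - X)) ≤ 3 * a * δ := by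
      calc vnorm (A *ᵥ svec Ψn (Xh - X)) ≤ a * vnorm (svec Ψn (Xh - X)) :=
            vnorm_mulVec_le _ _
        _ = a * frobNorm (Xh - X) := by rw [vnorm_svec Ψn hΨn hsub_sym]
        _ = a * frobNorm (X - Xh) := by rw [← frobNorm_neg (X - Xh), neg_sub]
        _ ≤ a * (3 * δ) := mul_le_mul_of_nonneg_left hdiff_frob ha0
        _ = 3 * a * δ := by ring
    linarith
  have hfinal : eta Ψn A Uh * t ≤ vnorm (A *ᵥ svec Ψn X) + 3 * a * δ := by
    have h := hetaUh
    rw [hval] at h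
    have h2 := mul_le_mul_of_nonneg_right h ht_pos.le
    calc eta Ψn A Uh * t ≤ t⁻¹ * vnorm (A *ᵥ svec Ψn Xh) * t := h2
      _ = vnorm (A *ᵥ svec Ψn Xh) := by field_simp
      _ ≤ vnorm (A *ᵥ svec Ψn X) + 3 * a * δ := hsplit
  have hmono : eta Ψn A Uh * (1 - 3 * δ) ≤ eta Ψn A Uh * t :=
    mul_le_mul_of_nonneg_left ht_lb (eta_nonneg Ψn A Uh)
  linarith [hmono, hfinal, hclt]

end onesided
section flip
variable {n r : ℕ}

lemma vnorm_neg {I : Type*} [Fintype I] (v : I → ℝ) : vnorm (-v) = vnorm v := by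
  have := vnorm_smul (-1) v
  simpa using this

set_option maxHeartbeats 1000000 in
lemma flip_bound {Q Qh : Matrix (Fin n) (Fin r) ℝ}
    (hQ : Qᵀ * Q = 1) (hQh : Qhᵀ * Qh = 1)
    (hε : specNorm ((1 - Qh * Qhᵀ) * Q) ≤ 1 / 10) :
    specNorm ((1 - Q * Qᵀ) * Qh) ≤ (10 / 9) * specNorm ((1 - Qh * Qhᵀ) * Q) := by
  set ε : ℝ := specNorm ((1 - Qh * Qhᵀ) * Q) with hεdef
  have hε0 : 0 ≤ ε := specNorm_nonneg _
  set N : Matrix (Fin r) (Fin r) ℝ := Qhᵀ * Q with hNdef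
  set E : Matrix (Fin n) (Fin r) ℝ := (1 - Qh * Qhᵀ) * Q with hEdef
  have hQdecomp : Q = Qh * N + E := by
    rw [hNdef, hEdef, Matrix.sub_mul, Matrix.one_mul, ← Matrix.mul_assoc]
    abel
  have hQhE : Qhᵀ * E = 0 := by
    rw [hEdef, ← Matrix.mul_assoc, Matrix.mul_sub, Matrix.mul_one, ← Matrix.mul_assoc,
      hQh, Matrix.one_mul, sub_self, Matrix.zero_mul]
  have hpyth : ∀ u : Fin r → ℝ,
      vnorm (N *ᵥ u) ^ 2 + vnorm (E *ᵥ u) ^ 2 = vnorm u ^ 2 := by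
    intro u
    have hsplit : Q *ᵥ u = Qh *ᵥ (N *ᵥ u) + E *ᵥ u := by
      rw [Matrix.mulVec_mulVec, ← Matrix.add_mulVec, ← hQdecomp]
    have hcross : (Qh *ᵥ (N *ᵥ u)) ⬝ᵥ (E *ᵥ u) = 0 := by
      rw [mulVec_dot, Matrix.mulVec_mulVec]
      rw [hQhE]
      simp
    have h1 : vnorm (Q *ᵥ u) ^ 2 = vnorm u ^ 2 := by
      rw [vnorm_mulVec_orth hQ]
    have h2 : vnorm (Q *ᵥ u) ^ 2
        = vnorm (Qh *ᵥ (N *ᵥ u)) ^ 2 + 2 * ((Qh *ᵥ (N *ᵥ u)) ⬝ᵥ (E *ᵥ u))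
          + vnorm (E *ᵥ u) ^ 2 := by
      rw [hsplit, vnorm_sq, vnorm_sq, vnorm_sq]
      exact dot_expand _ _
    rw [vnorm_mulVec_orth hQh] at h2
    rw [hcross] at h2
    linarith
  have hElow : ∀ u : Fin r → ℝ, vnorm (E *ᵥ u) ≤ ε * vnorm u := fun u => vnorm_mulVec_le E u
  have hNlow : ∀ u : Fin r → ℝ, vnorm u ≤ (10 / 9) * vnorm (N *ᵥ u) := by
    intro u
    have h1 := hpyth u
    have h2 := hElow u
    have h3 : vnorm (E *ᵥ u) ^ 2 ≤ (1 / 100) * vnorm u ^ 2 := by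
      have h4 : vnorm (E *ᵥ u) ^ 2 ≤ (ε * vnorm u) ^ 2 :=
        pow_le_pow_left₀ (vnorm_nonneg _) h2 2
      have h5 : (ε * vnorm u) ^ 2 ≤ (1 / 100) * vnorm u ^ 2 := by
        have hsq : ε ^ 2 ≤ 1 / 100 := by nlinarith [hε, hε0]
        have := mul_le_mul_of_nonneg_right hsq (sq_nonneg (vnorm u))
        calc (ε * vnorm u) ^ 2 = ε ^ 2 * vnorm u ^ 2 := by ring
          _ ≤ (1 / 100) * vnorm u ^ 2 := this
      linarith
    nlinarith [vnorm_nonneg u, vnorm_nonneg (N *ᵥ u)]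
  have hNinj : Function.Injective N.mulVec := by
    intro u v huv
    have h0 : N *ᵥ (u - v) = 0 := by rw [Matrix.mulVec_sub, huv, sub_self]
    have h1 : vnorm (N *ᵥ (u - v)) = 0 := by rw [h0, vnorm_zero]
    have h2 := hNlow (u - v)
    rw [h1] at h2
    have h3 : vnorm (u - v) = 0 := le_antisymm (by linarith) (vnorm_nonneg _)
    have h4 : u - v = 0 := vnorm_eq_zero h3
    exact sub_eq_zero.mp h4
  have hNunit : IsUnit N.det :=
    (Matrix.isUnit_iff_isUnit_det N).mp (Matrix.mulVec_injective_iff_isUnit.mp hNinj)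
  have hNNinv : N * N⁻¹ = 1 := Matrix.mul_nonsing_inv N hNunit
  -- projection annihilates range of Q
  have hperpQ : (1 - Q * Qᵀ) * Q = 0 := by
    rw [Matrix.sub_mul, Matrix.one_mul, Matrix.mul_assoc, hQ, Matrix.mul_one, sub_self]
  apply specNorm_le_of _ (mul_nonneg (by norm_num) hε0)
  intro v
  set w : Fin r → ℝ := N⁻¹ *ᵥ v with hwdef
  have hNw : N *ᵥ w = v := by
    rw [hwdef, Matrix.mulVec_mulVec, hNNinv, Matrix.one_mulVec]
  have hkey : ((1 - Q * Qᵀ) * Qh) *ᵥ v = (1 - Q * Qᵀ) *ᵥ (Qh *ᵥ v - Q *ᵥ w) := by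
    rw [Matrix.mulVec_sub]
    have hz : (1 - Q * Qᵀ) *ᵥ (Q *ᵥ w) = 0 := by
      rw [Matrix.mulVec_mulVec, hperpQ, Matrix.zero_mulVec]
    rw [hz, sub_zero, Matrix.mulVec_mulVec]
  have hdiff : Qh *ᵥ v - Q *ᵥ w = -(E *ᵥ w) := by
    rw [hQdecomp, Matrix.add_mulVec, ← Matrix.mulVec_mulVec, hNw]
    abel
  calc vnorm (((1 - Q * Qᵀ) * Qh) *ᵥ v)
      = vnorm ((1 - Q * Qᵀ) *ᵥ (Qh *ᵥ v - Q *ᵥ w)) := by rw [hkey]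
    _ ≤ specNorm (1 - Q * Qᵀ) * vnorm (Qh *ᵥ v - Q *ᵥ w) := vnorm_mulVec_le _ _
    _ ≤ 1 * vnorm (Qh *ᵥ v - Q *ᵥ w) :=
        mul_le_mul_of_nonneg_right (specNorm_proj_le hQ) (vnorm_nonneg _)
    _ = vnorm (E *ᵥ w) := by rw [one_mul, hdiff, vnorm_neg]
    _ ≤ ε * vnorm w := hElow w
    _ ≤ ε * ((10 / 9) * vnorm (N *ᵥ w)) :=
        mul_le_mul_of_nonneg_left (hNlow w) hε0
    _ = 10 / 9 * ε * vnorm v := by rw [hNw]; ring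

end flip

/-- Lemma 4.5, injectivity perturbation:
`|η_𝐀(Q) − η_𝐀(Q̂)| ≤ 10‖𝐀‖‖(I − Q̂Q̂ᵀ)Q‖` for `Q, Q̂` with orthonormal columns. -/
theorem stmt7 {n m r : ℕ}
    (Ψn : Matrix (Fin n × Fin n) (Fin (n * (n + 1) / 2)) ℝ) (hΨn : IsSymBasis Ψn)
    (A : Matrix (Fin m) (Fin (n * (n + 1) / 2)) ℝ)
    (Q Qh : Matrix (Fin n) (Fin r) ℝ)
    (hQ : Qᵀ * Q = 1) (hQh : Qhᵀ * Qh = 1) :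
    |eta Ψn A Q - eta Ψn A Qh| ≤
      10 * specNorm A * specNorm ((1 - Qh * Qhᵀ) * Q) := by
  rcases Nat.eq_zero_or_pos r with hr0 | hrpos
  · rw [eta_r0 Ψn A hr0 Q, eta_r0 Ψn A hr0 Qh]
    simp only [sub_zero, abs_zero]
    exact mul_nonneg (mul_nonneg (by norm_num) (specNorm_nonneg A)) (specNorm_nonneg _)
  · set ε : ℝ := specNorm ((1 - Qh * Qhᵀ) * Q) with hεdef
    set a : ℝ := specNorm A with hadef
    have hε0 : 0 ≤ ε := specNorm_nonneg _
    have ha0 : 0 ≤ a := specNorm_nonneg _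
    have hηQ0 : 0 ≤ eta Ψn A Q := eta_nonneg Ψn A Q
    have hηQh0 : 0 ≤ eta Ψn A Qh := eta_nonneg Ψn A Qh
    have hηQle : eta Ψn A Q ≤ a := eta_le_specNorm Ψn A hΨn hQ hrpos
    have hηQhle : eta Ψn A Qh ≤ a := eta_le_specNorm Ψn A hΨn hQh hrpos
    rcases le_or_gt ε (1 / 10) with hsmall | hbig
    · have hδlt : ε < 1 / 3 := by linarith
      have hdir := onesided Ψn A hΨn hQ hQh hrpos hδlt
      have hflip := flip_bound hQ hQh hsmall
      set ε' : ℝ := specNorm ((1 - Q * Qᵀ) * Qh) with hε'def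
      have hε'0 : 0 ≤ ε' := specNorm_nonneg _
      have hε'lt : ε' < 1 / 3 := by linarith
      have hrev := onesided Ψn A hΨn hQh hQ hrpos hε'lt
      have hp1 : ε * eta Ψn A Qh ≤ ε * a := mul_le_mul_of_nonneg_left hηQhle hε0
      have hp2 : ε' * eta Ψn A Q ≤ ε' * a := mul_le_mul_of_nonneg_left hηQle hε'0
      have hp3 : a * ε' ≤ a * (10 / 9 * ε) := mul_le_mul_of_nonneg_left hflip ha0
      rw [abs_le]
      constructor
      · nlinarith [hrev, hp2, hp3]
      · nlinarith [hdir, hp1]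
    · have h1 : |eta Ψn A Q - eta Ψn A Qh| ≤ a :=
        abs_le.mpr ⟨by linarith, by linarith⟩
      have h2 : a ≤ 10 * a * ε := by nlinarith [ha0, hbig]
      linarith
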